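/- Let A and E be real tensors of size n₁×n₂×n₃ and B = A+E (entrywise). Let Ap be a Moore-Penrose inverse of A and Bp a Moore-Penrose inverse of B. Then ‖Bp − Ap‖₂ ≤ ((1+√5)/2)·max{‖Ap‖₂², ‖Bp‖₂²}·‖E‖₂. -/

import Mathlib

open scoped Matrix.Norms.L2Operator

noncomputable section

/-- The t-product of third-order tensors. -/
def tProd {n₁ n₂ n₃ n₄ : ℕ} [NeZero n₃] (A : Fin n₁ → Fin n₂ → ZMod n₃ → ℝ)
    (B : Fin n₂ → Fin n₄ → ZMod n₃ → ℝ) : Fin n₁ → Fin n₄ → ZMod n₃ → ℝ :=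
  fun i j k => ∑ l : Fin n₂, ∑ m : ZMod n₃, A i l (k - m) * B l j m

/-- The Frobenius norm of a third-order tensor. -/
def frobNorm {n₁ n₂ n₃ : ℕ} [NeZero n₃] (A : Fin n₁ → Fin n₂ → ZMod n₃ → ℝ) : ℝ :=
  Real.sqrt (∑ i : Fin n₁, ∑ j : Fin n₂, ∑ k : ZMod n₃, (A i j k) ^ 2)

/-- The block circulant matrix of a third-order tensor. -/
def bcirc {n₁ n₂ n₃ : ℕ} (A : Fin n₁ → Fin n₂ → ZMod n₃ → ℝ) :
    Matrix (Fin n₁ × ZMod n₃) (Fin n₂ × ZMod n₃) ℝ :=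
  fun p q => A p.1 q.1 (p.2 - q.2)

/-- The spectral norm of a third-order tensor: the L2 operator norm of its
block circulant matrix. -/
def specNorm {n₁ n₂ n₃ : ℕ} [NeZero n₃] (A : Fin n₁ → Fin n₂ → ZMod n₃ → ℝ) : ℝ :=
  ‖bcirc A‖

/-- The identity tensor. -/
def tId (n n₃ : ℕ) : Fin n → Fin n → ZMod n₃ → ℝ :=
  fun i j k => if i = j ∧ k = 0 then 1 else 0

/-- The tensor transpose. -/
def tTrans {n₁ n₂ n₃ : ℕ} (A : Fin n₁ → Fin n₂ → ZMod n₃ → ℝ) :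
    Fin n₂ → Fin n₁ → ZMod n₃ → ℝ :=
  fun i j k => A j i (-k)

/-- `X` is a Moore-Penrose inverse of `A`. -/
def IsMPInv {n₁ n₂ n₃ : ℕ} [NeZero n₃] (A : Fin n₁ → Fin n₂ → ZMod n₃ → ℝ)
    (X : Fin n₂ → Fin n₁ → ZMod n₃ → ℝ) : Prop :=
  tProd (tProd A X) A = A ∧ tProd (tProd X A) X = X ∧
    tTrans (tProd A X) = tProd A X ∧ tTrans (tProd X A) = tProd X A

/-- The `i`-th DFT block of a third-order tensor. -/
def dftBlock {n₁ n₂ n₃ : ℕ} [NeZero n₃] (A : Fin n₁ → Fin n₂ → ZMod n₃ → ℝ) (i : ZMod n₃) :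
    Matrix (Fin n₁) (Fin n₂) ℂ :=
  fun p q => ∑ k : ZMod n₃,
    Complex.exp (-2 * Real.pi * Complex.I * (i.val : ℂ) * (k.val : ℂ) / (n₃ : ℂ)) * (A p q k : ℂ)

end

/-!
Passing to block circulant matrices turns the t-product, the tensor transpose and the spectral
norm into composition, adjoint and operator norm of operators between Euclidean spaces, so this
is Wedin's perturbation bound for Moore–Penrose inverses of bounded operators.

Write `B = A + E`, `T = B⁺ - A⁺` and let `P = B⁺B`, `Q = AA⁺` be the orthogonal projections.
The Penrose equations give `P T = -B⁺EA⁺ Q + B⁺B⁺†E† (1 - Q)` and `(1 - P) T = (1 - P)E†A⁺†A⁺ Q`.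
So `(1 - P) T (1 - Q) = 0`, and the three other blocks have norm at most
`α = max(‖A⁺‖², ‖B⁺‖²) ‖E‖`. Hence, with `s = ‖Qx‖` and `t = ‖(1 - Q)x‖`,
`‖Tx‖² ≤ α² ((s + t)² + s²) ≤ φ² α² (s² + t²) = φ² α² ‖x‖²`.
-/

open scoped InnerProductSpace InnerProduct goldenRatio
open Real

theorem add_sq_add_sq_le_goldenRatio_sq_mul (s t : ℝ) :
    (s + t) ^ 2 + s ^ 2 ≤ φ ^ 2 * (s ^ 2 + t ^ 2) := by
  have h : φ ^ 2 * (s ^ 2 + t ^ 2) - ((s + t) ^ 2 + s ^ 2) = φ * ((φ - 1) * s - t) ^ 2 := by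
    linear_combination ((2 - φ) * s ^ 2 + 2 * s * t + t ^ 2) * goldenRatio_sq
  rw [← sub_nonneg, h]
  positivity

namespace ContinuousLinearMap

theorem opNorm_comp_comp_le {𝕜 E F G L : Type*} [NontriviallyNormedField 𝕜]
    [SeminormedAddCommGroup E] [NormedSpace 𝕜 E] [SeminormedAddCommGroup F] [NormedSpace 𝕜 F]
    [SeminormedAddCommGroup G] [NormedSpace 𝕜 G] [SeminormedAddCommGroup L] [NormedSpace 𝕜 L]
    (f : G →L[𝕜] L) (g : F →L[𝕜] G) (h : E →L[𝕜] F) : ‖f ∘L g ∘L h‖ ≤ ‖f‖ * ‖g‖ * ‖h‖ :=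
  (opNorm_comp_le _ _).trans <| by rw [mul_assoc]; gcongr; exact opNorm_comp_le _ _

variable {𝕜 H K : Type*} [RCLike 𝕜]
  [NormedAddCommGroup H] [InnerProductSpace 𝕜 H] [CompleteSpace H]
  [NormedAddCommGroup K] [InnerProductSpace 𝕜 K] [CompleteSpace K]

theorem _root_.IsStarProjection.norm_sq_eq_add_norm_sq {p : H →L[𝕜] H} (hp : IsStarProjection p)
    (x : H) : ‖x‖ ^ 2 = ‖p x‖ ^ 2 + ‖(1 - p) x‖ ^ 2 := by
  have horth : ⟪p x, (1 - p) x⟫_𝕜 = 0 := by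
    rw [← adjoint_inner_right, ← star_eq_adjoint, hp.isSelfAdjoint.star_eq, ← mul_apply_eq_comp,
      hp.mul_one_sub_self, zero_apply, inner_zero_right]
  have hx : p x + (1 - p) x = x := by rw [← add_apply, add_sub_cancel, one_apply_eq_self]
  simpa only [sq, hx] using norm_add_sq_eq_norm_sq_add_norm_sq_of_inner_eq_zero _ _ horth

theorem norm_le_goldenRatio_mul {p : H →L[𝕜] H} {q : K →L[𝕜] K} (hp : IsStarProjection p)
    (hq : IsStarProjection q) {T X Y Z : K →L[𝕜] H} {α : ℝ}
    (hpT : p ∘L T = X ∘L q + Y ∘L (1 - q)) (hpT_compl : (1 - p) ∘L T = Z ∘L q)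
    (hX : ‖X‖ ≤ α) (hY : ‖Y‖ ≤ α) (hZ : ‖Z‖ ≤ α) : ‖T‖ ≤ φ * α := by
  have hα : 0 ≤ α := (norm_nonneg X).trans hX
  refine opNorm_le_bound _ (by positivity) fun x => ?_
  set s := ‖q x‖
  set t := ‖(1 - q) x‖
  have hp_le : ‖p (T x)‖ ≤ α * s + α * t := by
    rw [← comp_apply, hpT, add_apply, comp_apply, comp_apply]
    exact (norm_add_le _ _).trans (add_le_add (le_of_opNorm_le _ hX _) (le_of_opNorm_le _ hY _))
  have hp_compl_le : ‖(1 - p) (T x)‖ ≤ α * s := by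
    rw [← comp_apply, hpT_compl, comp_apply]
    exact le_of_opNorm_le _ hZ _
  have hsq : ‖T x‖ ^ 2 ≤ (φ * α * ‖x‖) ^ 2 := calc
    ‖T x‖ ^ 2 = ‖p (T x)‖ ^ 2 + ‖(1 - p) (T x)‖ ^ 2 := hp.norm_sq_eq_add_norm_sq _
    _ ≤ (α * s + α * t) ^ 2 + (α * s) ^ 2 := by gcongr
    _ = α ^ 2 * ((s + t) ^ 2 + s ^ 2) := by ring
    _ ≤ α ^ 2 * (φ ^ 2 * (s ^ 2 + t ^ 2)) := by
      gcongr; exact add_sq_add_sq_le_goldenRatio_sq_mul s t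
    _ = (φ * α * ‖x‖) ^ 2 := by rw [mul_pow, hq.norm_sq_eq_add_norm_sq x]; ring
  exact le_of_sq_le_sq hsq (by positivity)

structure IsMoorePenroseInverse (A : H →L[𝕜] K) (X : K →L[𝕜] H) : Prop where
  comp_inv_comp : A ∘L X ∘L A = A
  inv_comp_inv : X ∘L A ∘L X = X
  isSelfAdjoint_comp_inv : IsSelfAdjoint (A ∘L X)
  isSelfAdjoint_inv_comp : IsSelfAdjoint (X ∘L A)

namespace IsMoorePenroseInverse

variable {A E : H →L[𝕜] K} {X Ap Bp : K →L[𝕜] H}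

theorem isStarProjection_comp_inv (h : IsMoorePenroseInverse A X) :
    IsStarProjection (A ∘L X) where
  isIdempotentElem := by rw [IsIdempotentElem, mul_def, comp_assoc, h.inv_comp_inv]
  isSelfAdjoint := h.isSelfAdjoint_comp_inv

theorem isStarProjection_inv_comp (h : IsMoorePenroseInverse A X) :
    IsStarProjection (X ∘L A) where
  isIdempotentElem := by rw [IsIdempotentElem, mul_def, comp_assoc, h.comp_inv_comp]
  isSelfAdjoint := h.isSelfAdjoint_inv_comp

theorem adjoint_comp_one_sub (h : IsMoorePenroseInverse A X) : A† ∘L (1 - A ∘L X) = 0 := by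
  rw [comp_sub, one_def, comp_id, ← h.isSelfAdjoint_comp_inv.adjoint_eq, ← adjoint_comp,
    comp_assoc, h.comp_inv_comp, sub_self]

theorem one_sub_comp_adjoint (h : IsMoorePenroseInverse A X) : (1 - X ∘L A) ∘L A† = 0 := by
  rw [sub_comp, one_def, id_comp, ← h.isSelfAdjoint_inv_comp.adjoint_eq, ← adjoint_comp,
    h.comp_inv_comp, sub_self]

theorem inv_eq_inv_comp_adjoint_comp_adjoint (h : IsMoorePenroseInverse A X) :
    X = X ∘L X† ∘L A† := by
  conv_lhs => rw [← h.inv_comp_inv, ← h.isSelfAdjoint_comp_inv.adjoint_eq, adjoint_comp]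

theorem inv_eq_adjoint_comp_adjoint_comp_inv (h : IsMoorePenroseInverse A X) :
    X = A† ∘L X† ∘L X := by
  conv_lhs =>
    rw [← h.inv_comp_inv, ← comp_assoc, ← h.isSelfAdjoint_inv_comp.adjoint_eq, adjoint_comp]
  rw [comp_assoc]

theorem inv_comp_add_comp_sub (hA : IsMoorePenroseInverse A Ap)
    (hB : IsMoorePenroseInverse (A + E) Bp) :
    (Bp ∘L (A + E)) ∘L (Bp - Ap) =
      (-(Bp ∘L E ∘L Ap)) ∘L (A ∘L Ap) + (Bp ∘L Bp† ∘L E†) ∘L (1 - A ∘L Ap) := by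
  have hBp : Bp ∘L (1 - A ∘L Ap) = Bp ∘L Bp† ∘L E† ∘L (1 - A ∘L Ap) := by
    conv_lhs => rw [hB.inv_eq_inv_comp_adjoint_comp_adjoint]
    rw [comp_assoc, comp_assoc, map_add, add_comp, hA.adjoint_comp_one_sub, zero_add]
  calc (Bp ∘L (A + E)) ∘L (Bp - Ap) = Bp ∘L (1 - A ∘L Ap) - Bp ∘L E ∘L Ap := by
        rw [comp_sub, comp_assoc, comp_assoc, hB.inv_comp_inv, add_comp, comp_add, comp_sub,
          one_def, comp_id]
        abel
    _ = _ := by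
        rw [hBp]
        simp only [neg_comp, comp_assoc, hA.inv_comp_inv]
        abel

theorem one_sub_inv_comp_add_comp_sub (hA : IsMoorePenroseInverse A Ap)
    (hB : IsMoorePenroseInverse (A + E) Bp) :
    (1 - Bp ∘L (A + E)) ∘L (Bp - Ap) =
      ((1 - Bp ∘L (A + E)) ∘L E† ∘L Ap† ∘L Ap) ∘L (A ∘L Ap) := by
  have hBp : (1 - Bp ∘L (A + E)) ∘L Bp = 0 := by
    rw [sub_comp, one_def, id_comp, comp_assoc, hB.inv_comp_inv, sub_self]
  have hA_adj : (1 - Bp ∘L (A + E)) ∘L A† = -((1 - Bp ∘L (A + E)) ∘L E†) := by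
    rw [eq_neg_iff_add_eq_zero, ← comp_add, ← map_add, hB.one_sub_comp_adjoint]
  have hAp : (1 - Bp ∘L (A + E)) ∘L Ap = -((1 - Bp ∘L (A + E)) ∘L E† ∘L Ap† ∘L Ap) := by
    conv_lhs => rw [hA.inv_eq_adjoint_comp_adjoint_comp_inv]
    rw [← comp_assoc (1 - Bp ∘L (A + E)) (A†), hA_adj, neg_comp, comp_assoc]
  rw [comp_sub, hBp, hAp, zero_sub, neg_neg]
  simp only [comp_assoc, hA.inv_comp_inv]

theorem norm_sub_le (hA : IsMoorePenroseInverse A Ap) (hB : IsMoorePenroseInverse (A + E) Bp) :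
    ‖Bp - Ap‖ ≤ φ * max (‖Ap‖ ^ 2) (‖Bp‖ ^ 2) * ‖E‖ := by
  have hE : ‖E†‖ = ‖E‖ := adjoint.norm_map E
  have hAp : ‖Ap†‖ = ‖Ap‖ := adjoint.norm_map Ap
  have hBp : ‖Bp†‖ = ‖Bp‖ := adjoint.norm_map Bp
  have hab : ‖Bp‖ * ‖Ap‖ ≤ max (‖Ap‖ ^ 2) (‖Bp‖ ^ 2) := by
    rcases le_total ‖Ap‖ ‖Bp‖ with h | h <;>
      nlinarith [le_max_left (‖Ap‖ ^ 2) (‖Bp‖ ^ 2), le_max_right (‖Ap‖ ^ 2) (‖Bp‖ ^ 2),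
        norm_nonneg Ap, norm_nonneg Bp]
  rw [mul_assoc]
  refine norm_le_goldenRatio_mul hB.isStarProjection_inv_comp hA.isStarProjection_comp_inv
    (hA.inv_comp_add_comp_sub hB) (hA.one_sub_inv_comp_add_comp_sub hB) ?_ ?_ ?_
  · calc ‖-(Bp ∘L E ∘L Ap)‖ ≤ ‖Bp‖ * ‖E‖ * ‖Ap‖ := by
          rw [norm_neg]; exact opNorm_comp_comp_le Bp E Ap
      _ = ‖Bp‖ * ‖Ap‖ * ‖E‖ := by ring
      _ ≤ _ := by gcongr
  · calc ‖Bp ∘L Bp† ∘L E†‖ ≤ ‖Bp‖ * ‖Bp†‖ * ‖E†‖ := opNorm_comp_comp_le Bp (Bp†) (E†)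
      _ = ‖Bp‖ ^ 2 * ‖E‖ := by rw [hBp, hE]; ring
      _ ≤ _ := by gcongr; exact le_max_right _ _
  · calc ‖(1 - Bp ∘L (A + E)) ∘L E† ∘L Ap† ∘L Ap‖
          ≤ ‖1 - Bp ∘L (A + E)‖ * (‖E†‖ * ‖Ap†‖ * ‖Ap‖) :=
          (opNorm_comp_le _ _).trans (by gcongr; exact opNorm_comp_comp_le (E†) (Ap†) Ap)
      _ ≤ 1 * (‖E‖ * ‖Ap‖ * ‖Ap‖) := by
          rw [hE, hAp]; gcongr; exact hB.isStarProjection_inv_comp.one_sub.norm_le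
      _ = ‖Ap‖ ^ 2 * ‖E‖ := by ring
      _ ≤ _ := by gcongr; exact le_max_left _ _

end IsMoorePenroseInverse

end ContinuousLinearMap

namespace Matrix

variable {𝕜 m n : Type*} [RCLike 𝕜] [Fintype m] [Fintype n] [DecidableEq n]

noncomputable def toL2Op : Matrix m n 𝕜 ≃ₗ[𝕜] (EuclideanSpace 𝕜 n →L[𝕜] EuclideanSpace 𝕜 m) :=
  toEuclideanLin.trans LinearMap.toContinuousLinearMap

theorem norm_toL2Op (M : Matrix m n 𝕜) : ‖toL2Op M‖ = ‖M‖ := rfl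

theorem toL2Op_mul {l : Type*} [Fintype l] [DecidableEq l] (M : Matrix m n 𝕜)
    (N : Matrix n l 𝕜) :
    toL2Op (M * N) = toL2Op M ∘L toL2Op N := by
  ext1 x
  simp [toL2Op]

theorem toL2Op_conjTranspose [DecidableEq m] (M : Matrix m n 𝕜) : toL2Op Mᴴ = (toL2Op M)† := by
  rw [toL2Op, LinearEquiv.trans_apply, toEuclideanLin_eq_toLin_orthonormal,
    toLin_conjTranspose, LinearMap.adjoint_toContinuousLinearMap]
  rfl

end Matrix

section Tensor

open Matrix

variable {n₁ n₂ n₃ n₄ : ℕ}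

theorem bcirc_add (X Y : Fin n₁ → Fin n₂ → ZMod n₃ → ℝ) : bcirc (X + Y) = bcirc X + bcirc Y :=
  rfl

theorem bcirc_sub (X Y : Fin n₁ → Fin n₂ → ZMod n₃ → ℝ) : bcirc (X - Y) = bcirc X - bcirc Y :=
  rfl

theorem bcirc_tTrans (A : Fin n₁ → Fin n₂ → ZMod n₃ → ℝ) : bcirc (tTrans A) = (bcirc A)ᵀ := by
  ext ⟨i, k⟩ ⟨j, m⟩
  exact congrArg (A j i) (neg_sub k m)

theorem bcirc_tProd [NeZero n₃] (A : Fin n₁ → Fin n₂ → ZMod n₃ → ℝ)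
    (B : Fin n₂ → Fin n₄ → ZMod n₃ → ℝ) : bcirc (tProd A B) = bcirc A * bcirc B := by
  ext ⟨i, k⟩ ⟨j, m⟩
  simp only [bcirc, tProd, mul_apply, Fintype.sum_prod_type]
  refine Finset.sum_congr rfl fun l _ => Fintype.sum_equiv (Equiv.addRight m) _ _ fun x => ?_
  simp [sub_sub, add_comm]

theorem toL2Op_bcirc_tProd [NeZero n₃] (A : Fin n₁ → Fin n₂ → ZMod n₃ → ℝ)
    (B : Fin n₂ → Fin n₄ → ZMod n₃ → ℝ) :
    toL2Op (bcirc (tProd A B)) = toL2Op (bcirc A) ∘L toL2Op (bcirc B) := by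
  rw [bcirc_tProd, toL2Op_mul]

theorem isSelfAdjoint_toL2Op_bcirc [NeZero n₃] {A : Fin n₁ → Fin n₁ → ZMod n₃ → ℝ}
    (hA : tTrans A = A) : IsSelfAdjoint (toL2Op (bcirc A)) := by
  rw [IsSelfAdjoint, ContinuousLinearMap.star_eq_adjoint, ← toL2Op_conjTranspose,
    conjTranspose_eq_transpose_of_trivial, ← bcirc_tTrans, hA]

theorem IsMPInv.isMoorePenroseInverse [NeZero n₃] {A : Fin n₁ → Fin n₂ → ZMod n₃ → ℝ}
    {X : Fin n₂ → Fin n₁ → ZMod n₃ → ℝ} (h : IsMPInv A X) :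
    (toL2Op (bcirc A)).IsMoorePenroseInverse (toL2Op (bcirc X)) := by
  obtain ⟨hAXA, hXAX, hAX, hXA⟩ := h
  refine ⟨?_, ?_, ?_, ?_⟩
  · rw [← ContinuousLinearMap.comp_assoc, ← toL2Op_bcirc_tProd, ← toL2Op_bcirc_tProd, hAXA]
  · rw [← ContinuousLinearMap.comp_assoc, ← toL2Op_bcirc_tProd, ← toL2Op_bcirc_tProd, hXAX]
  · rw [← toL2Op_bcirc_tProd]
    exact isSelfAdjoint_toL2Op_bcirc hAX
  · rw [← toL2Op_bcirc_tProd]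
    exact isSelfAdjoint_toL2Op_bcirc hXA

end Tensor

theorem mp_inverse_perturbation_spectral_general (n₁ n₂ n₃ : ℕ) [NeZero n₃]
    (A E : Fin n₁ → Fin n₂ → ZMod n₃ → ℝ)
    (Ap Bp : Fin n₂ → Fin n₁ → ZMod n₃ → ℝ)
    (hAp : IsMPInv A Ap) (hBp : IsMPInv (A + E) Bp) :
    specNorm (Bp - Ap) ≤
      ((1 + Real.sqrt 5) / 2) * max (specNorm Ap ^ 2) (specNorm Bp ^ 2) * specNorm E := by
  have hB := hBp.isMoorePenroseInverse
  rw [bcirc_add, map_add] at hB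
  have := hAp.isMoorePenroseInverse.norm_sub_le hB
  rwa [← map_sub, ← bcirc_sub] at this

theorem mp_inverse_perturbation_spectral (n₁ n₂ n₃ : ℕ) [NeZero n₃]
    (hn₁ : 0 < n₁) (hn₂ : 0 < n₂)
    (A E : Fin n₁ → Fin n₂ → ZMod n₃ → ℝ)
    (Ap Bp : Fin n₂ → Fin n₁ → ZMod n₃ → ℝ)
    (hAp : IsMPInv A Ap) (hBp : IsMPInv (A + E) Bp) :
    specNorm (Bp - Ap) ≤
      ((1 + Real.sqrt 5) / 2) * max (specNorm Ap ^ 2) (specNorm Bp ^ 2) * specNorm E :=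
  mp_inverse_perturbation_spectral_general n₁ n₂ n₃ A E Ap Bp hAp hBp
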